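/- arXiv:1608.07746 — 6 statements merged into one kernel-verified Lean document; each statement's English description precedes it below -/
import Mathlib

section
/- Let X be a real Banach space with continuous dual X*, let T > 0, 1 ≤ q ≤ ∞ and p the conjugate exponent (1/p + 1/q = 1). Let f, g : [0,T] → X* satisfy: for every x ∈ X, t ↦ ⟨f(t), x⟩ and t ↦ ⟨g(t), x⟩ are Lebesgue integrable; there exists h ∈ L^q(0,T) with ‖f(t)‖_{X*} ≤ h(t) and ‖g(t)‖_{X*} ≤ h(t) a.e.; and ∫_0^T ⟨f(t), x⟩ η'(t) dt = −∫_0^T ⟨g(t), x⟩ η(t) dt for all x ∈ X, η ∈ C_c^∞(0,T). Let f̄ denote the norm-continuous representative of f (so ⟨f̄(·),x⟩ = ⟨f(·),x⟩ a.e. for each x, and ⟨f̄(t₂)−f̄(t₁),x⟩ = ∫_{t₁}^{t₂}⟨g,x⟩). Let α : [0,T] → X be given by α(t) = α(0) + ∫_0^t α'(s) ds (Bochner integral), where α' : [0,T] → X is Bochner integrable with ‖α'(·)‖_X ∈ L^p(0,T). Then for all 0 ≤ t₁ ≤ t₂ ≤ T, the functions t ↦ ⟨g(t), α(t)⟩ and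 t ↦ ⟨f(t), α'(t)⟩ are integrable on (t₁,t₂) and ∫_{t₁}^{t₂} ⟨g(t), α(t)⟩ dt = ⟨f̄(t₂), α(t₂)⟩ − ⟨f̄(t₁), α(t₁)⟩ − ∫_{t₁}^{t₂} ⟨f(t), α'(t)⟩ dt. -/
open MeasureTheory Set Filter Topology
open scoped ENNReal

lemma gelfand_aux_prod_meas {X : Type*} [NormedAddCommGroup X] [NormedSpace ℝ X]
    (g : ℝ → StrongDual ℝ X) (β : ℝ → X)
    (μ ν : Measure ℝ) [SFinite μ] [SFinite ν]
    (hg : ∀ x : X, AEMeasurable (fun t => g t x) μ)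
    (hβ : AEStronglyMeasurable β ν) :
    AEMeasurable (fun p : ℝ × ℝ => g p.1 (β p.2)) (μ.prod ν) := by
  set β' := hβ.mk β with hβ'def
  have hββ' : β =ᵐ[ν] β' := hβ.ae_eq_mk
  have hβ'm : StronglyMeasurable β' := hβ.stronglyMeasurable_mk
  have hsnd : (fun p : ℝ × ℝ => β p.2) =ᵐ[μ.prod ν] (fun p => β' p.2) :=
    Measure.quasiMeasurePreserving_snd.ae_eq_comp hββ'
  have key : AEMeasurable (fun p : ℝ × ℝ => g p.1 (β' p.2)) (μ.prod ν) := by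
    have claim : ∀ φ : SimpleFunc ℝ X,
        AEMeasurable (fun p : ℝ × ℝ => g p.1 (φ p.2)) (μ.prod ν) := by
      intro φ
      refine SimpleFunc.induction (fun c s hs => ?_) (fun φ ψ hdisj hφ hψ => ?_) φ
      · have : (fun p : ℝ × ℝ =>
            g p.1 ((SimpleFunc.piecewise s hs (SimpleFunc.const ℝ c)
              (SimpleFunc.const ℝ 0)) p.2))
            = fun p : ℝ × ℝ => (Prod.snd ⁻¹' s).indicator (fun p : ℝ × ℝ => g p.1 c) p := by
          funext p
          by_cases hp : p.2 ∈ s <;>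
            simp [SimpleFunc.piecewise_apply, hp, Set.indicator_apply]
        rw [this]
        exact AEMeasurable.indicator
          ((hg c).comp_quasiMeasurePreserving Measure.quasiMeasurePreserving_fst)
          (measurable_snd hs)
      · have : (fun p : ℝ × ℝ => g p.1 ((φ + ψ) p.2))
            = fun p : ℝ × ℝ => g p.1 (φ p.2) + g p.1 (ψ p.2) := by
          funext p; simp
        rw [this]; exact hφ.add hψ
    apply aemeasurable_of_tendsto_metrizable_ae'
      (f := fun n (p : ℝ × ℝ) => g p.1 (hβ'm.approx n p.2))
      (fun n => claim _)
    filter_upwards with p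
    exact ((g p.1).continuous.tendsto _).comp (hβ'm.tendsto_approx p.2)
  exact key.congr (by filter_upwards [hsnd] with p hp; rw [hp])

lemma gelfand_aux_ae_eq {X : Type*} [NormedAddCommGroup X] [NormedSpace ℝ X]
    (f fbar : ℝ → StrongDual ℝ X) (α' : ℝ → X) (μ : Measure ℝ)
    (hfbar_ae : ∀ x : X, ∀ᵐ t ∂μ, fbar t x = f t x)
    (hα' : AEStronglyMeasurable α' μ) :
    ∀ᵐ t ∂μ, fbar t (α' t) = f t (α' t) := by
  set β := hα'.mk α' with hβdef
  obtain ⟨c, hc, hcc⟩ := hα'.stronglyMeasurable_mk.isSeparable_range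
  have h1 : ∀ᵐ t ∂μ, ∀ x ∈ c, fbar t x = f t x := (ae_ball_iff hc).2 fun x _ => hfbar_ae x
  filter_upwards [h1, hα'.ae_eq_mk] with t ht htβ
  rw [htβ]
  have heq : Set.EqOn (fbar t) (f t) c := fun x hx => ht x hx
  exact heq.closure (fbar t).continuous (f t).continuous (hcc (mem_range_self t))

/-- Integration by parts for the Gelfand integral: if `f ∈ W^{1,q}_{w*}(0,T;X*)`
with weak* derivative `g` and norm-continuous representative `f̄`, and if
`α ∈ W^{1,p}(0,T;X)` in the Bochner sense (with `1/p + 1/q = 1`), then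
`∫_{t₁}^{t₂} ⟨g(t), α(t)⟩ dt = ⟨f̄(t₂), α(t₂)⟩ − ⟨f̄(t₁), α(t₁)⟩
  − ∫_{t₁}^{t₂} ⟨f(t), α'(t)⟩ dt`. -/
theorem gelfand_integration_by_parts
    (X : Type*) [NormedAddCommGroup X] [NormedSpace ℝ X] [CompleteSpace X]
    (T : ℝ) (hT : 0 < T) (p q : ℝ≥0∞) (hq : 1 ≤ q) (hpq : 1/p + 1/q = 1)
    (f g : ℝ → StrongDual ℝ X)
    (hfi : ∀ x : X, IntegrableOn (fun t => f t x) (Ioo 0 T))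
    (hgi : ∀ x : X, IntegrableOn (fun t => g t x) (Ioo 0 T))
    (h : ℝ → ℝ) (hh : MemLp h q (volume.restrict (Ioo 0 T)))
    (hbd : ∀ᵐ t ∂(volume.restrict (Ioo 0 T)), ‖f t‖ ≤ h t ∧ ‖g t‖ ≤ h t)
    (hweak : ∀ x : X, ∀ η : ℝ → ℝ, ContDiff ℝ (⊤ : ℕ∞) η → HasCompactSupport η →
        tsupport η ⊆ Ioo 0 T →
        ∫ t in Ioo 0 T, f t x * deriv η t = - ∫ t in Ioo 0 T, g t x * η t)
    (fbar : ℝ → StrongDual ℝ X)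
    (hfbar_ae : ∀ x : X, ∀ᵐ t ∂(volume.restrict (Ioo 0 T)), fbar t x = f t x)
    (hfbar_ftc : ∀ t₁ ∈ Icc 0 T, ∀ t₂ ∈ Icc 0 T, ∀ x : X,
        fbar t₂ x - fbar t₁ x = ∫ s in t₁..t₂, g s x)
    (α α' : ℝ → X)
    (hα'i : IntegrableOn α' (Ioo 0 T))
    (hα'p : MemLp (fun t => ‖α' t‖) p (volume.restrict (Ioo 0 T)))
    (hα : ∀ t ∈ Icc 0 T, α t = α 0 + ∫ s in (0:ℝ)..t, α' s) :
    ∀ t₁ ∈ Icc 0 T, ∀ t₂ ∈ Icc 0 T, t₁ ≤ t₂ →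
      IntegrableOn (fun t => g t (α t)) (Ioo t₁ t₂) ∧
      IntegrableOn (fun t => f t (α' t)) (Ioo t₁ t₂) ∧
      ∫ t in Ioo t₁ t₂, g t (α t) =
        fbar t₂ (α t₂) - fbar t₁ (α t₁) - ∫ t in Ioo t₁ t₂, f t (α' t) := by
  intro t₁ ht₁ t₂ ht₂ h12
  have hsub : Ioo t₁ t₂ ⊆ Ioo 0 T := fun t ht =>
    ⟨lt_of_le_of_lt ht₁.1 ht.1, lt_of_lt_of_le ht.2 ht₂.2⟩
  have hsubI : Ioo t₁ t₂ ⊆ Icc 0 T := fun t ht =>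
    ⟨le_of_lt (lt_of_le_of_lt ht₁.1 ht.1), le_of_lt (lt_of_lt_of_le ht.2 ht₂.2)⟩
  set S : Set ℝ := Ioo t₁ t₂ with hSdef
  set μS : Measure ℝ := volume.restrict S with hμSdef
  haveI : IsFiniteMeasure (volume.restrict (Ioo 0 T)) :=
    ⟨by rw [Measure.restrict_apply_univ]; exact measure_Ioo_lt_top⟩
  haveI : IsFiniteMeasure μS := ⟨by
    rw [hμSdef, Measure.restrict_apply_univ]; exact measure_Ioo_lt_top⟩
  -- transfer of hypotheses to the subinterval / Icc
  have hrIcc : volume.restrict (Icc 0 T) = volume.restrict (Ioo 0 T) :=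
    (Measure.restrict_congr_set Ioo_ae_eq_Icc).symm
  have hα'Icc : IntegrableOn α' (Icc 0 T) := by
    unfold IntegrableOn; rw [hrIcc]; exact hα'i
  have hα'S : IntegrableOn α' S := hα'i.mono_set hsub
  have hα'II : ∀ a ∈ Icc (0:ℝ) T, ∀ b ∈ Icc (0:ℝ) T, IntervalIntegrable α' volume a b := by
    intro a ha b hb
    rw [intervalIntegrable_iff]
    refine hα'Icc.mono_set (subset_trans uIoc_subset_uIcc ?_)
    rw [uIcc_eq_union]
    exact union_subset (Icc_subset_Icc ha.1 hb.2) (Icc_subset_Icc hb.1 ha.2)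
  have hgS : ∀ x : X, IntegrableOn (fun t => g t x) S := fun x => (hgi x).mono_set hsub
  have hhS : Integrable h μS :=
    (hh.mono_measure (Measure.restrict_mono hsub le_rfl)).integrable hq
  -- pointwise a.e. bound for g
  have hgb : ∀ᵐ t ∂μS, ∀ x : X, |g t x| ≤ h t * ‖x‖ := by
    have := ae_restrict_of_ae_restrict_of_subset hsub hbd
    filter_upwards [this] with t ht x
    calc |g t x| = ‖g t x‖ := (Real.norm_eq_abs _).symm
      _ ≤ ‖g t‖ * ‖x‖ := (g t).le_opNorm x
      _ ≤ h t * ‖x‖ := mul_le_mul_of_nonneg_right ht.2 (norm_nonneg x)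
  -- the primitive identity
  have hprim : ∀ t ∈ Icc (0:ℝ) T, t₁ ≤ t → ∫ s in Ioo t₁ t, α' s = α t - α t₁ := by
    intro t ht h1t
    have h1 : α t - α t₁ = ∫ s in t₁..t, α' s := by
      rw [hα t ht, hα t₁ ht₁]
      rw [show α 0 + (∫ s in (0:ℝ)..t, α' s) - (α 0 + ∫ s in (0:ℝ)..t₁, α' s)
          = (∫ s in (0:ℝ)..t, α' s) - ∫ s in (0:ℝ)..t₁, α' s by abel]
      exact intervalIntegral.integral_interval_sub_left
        (hα'II 0 (left_mem_Icc.2 (le_of_lt hT)) t ht)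
        (hα'II 0 (left_mem_Icc.2 (le_of_lt hT)) t₁ ht₁)
    rw [h1, intervalIntegral.integral_of_le h1t, integral_Ioc_eq_integral_Ioo]
  -- the kernel on the product space
  set E : Set (ℝ × ℝ) := {p : ℝ × ℝ | p.2 < p.1} with hEdef
  have hEm : MeasurableSet E := measurableSet_lt measurable_snd measurable_fst
  set G : ℝ × ℝ → ℝ := E.indicator (fun p => g p.1 (α' p.2)) with hGdef
  have hGmeas : AEStronglyMeasurable G (μS.prod μS) := by
    have base : AEMeasurable (fun p : ℝ × ℝ => g p.1 (α' p.2)) (μS.prod μS) :=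
      gelfand_aux_prod_meas g α' μS μS
        (fun x => (hgS x).aestronglyMeasurable.aemeasurable)
        hα'S.aestronglyMeasurable
    exact (base.indicator hEm).aestronglyMeasurable
  have hGint : Integrable G (μS.prod μS) := by
    have hdom : Integrable (fun p : ℝ × ℝ => h p.1 * ‖α' p.2‖) (μS.prod μS) :=
      hhS.mul_prod hα'S.norm
    refine hdom.mono' hGmeas ?_
    have hgbp : ∀ᵐ p ∂(μS.prod μS), ∀ x : X, |g p.1 x| ≤ h p.1 * ‖x‖ :=
      Measure.quasiMeasurePreserving_fst.tendsto_ae.eventually hgb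
    filter_upwards [hgbp] with p hp
    refine le_trans (norm_indicator_le_norm_self _ _) ?_
    rw [Real.norm_eq_abs]
    exact hp (α' p.2)
  -- inner integral (in s): N t
  have hN : ∀ t ∈ S, (∫ s, G (t, s) ∂μS) = g t (α t) - g t (α t₁) := by
    intro t ht
    have h1 : (fun s => G (t, s)) = (Iio t).indicator (fun s => g t (α' s)) := by
      funext s
      by_cases hs : s < t <;> simp [hGdef, hEdef, Set.indicator_apply, hs, Set.mem_Iio]
    have h2 : Iio t ∩ S = Ioo t₁ t := by
      ext s
      simp only [Set.mem_inter_iff, Set.mem_Iio, hSdef, Set.mem_Ioo]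
      constructor
      · rintro ⟨hst, hs1, hs2⟩; exact ⟨hs1, hst⟩
      · rintro ⟨hs1, hst⟩; exact ⟨hst, hs1, lt_trans hst ht.2⟩
    rw [h1, hμSdef, integral_indicator measurableSet_Iio,
      Measure.restrict_restrict measurableSet_Iio, h2]
    have h3 : IntegrableOn α' (Ioo t₁ t) :=
      hα'S.mono_set (Ioo_subset_Ioo le_rfl (le_of_lt ht.2))
    rw [ContinuousLinearMap.integral_comp_comm _ h3,
      hprim t (hsubI ht) (le_of_lt ht.1), map_sub]
  -- inner integral (in t): M s
  have hM : ∀ s ∈ S, (∫ t, G (t, s) ∂μS) = fbar t₂ (α' s) - fbar s (α' s) := by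
    intro s hs
    have h1 : (fun t => G (t, s)) = (Ioi s).indicator (fun t => g t (α' s)) := by
      funext t
      by_cases hts : s < t <;> simp [hGdef, hEdef, Set.indicator_apply, hts, Set.mem_Ioi]
    have h2 : Ioi s ∩ S = Ioo s t₂ := by
      ext t
      simp only [Set.mem_inter_iff, Set.mem_Ioi, hSdef, Set.mem_Ioo]
      constructor
      · rintro ⟨hst, h1t, h2t⟩; exact ⟨hst, h2t⟩
      · rintro ⟨hst, h2t⟩; exact ⟨hst, lt_trans hs.1 hst, h2t⟩
    rw [h1, hμSdef, integral_indicator measurableSet_Ioi,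
      Measure.restrict_restrict measurableSet_Ioi, h2]
    rw [hfbar_ftc s (hsubI hs) t₂ ht₂ (α' s),
      intervalIntegral.integral_of_le (le_of_lt hs.2), integral_Ioc_eq_integral_Ioo]
  -- integrability of the three functions
  have hNint : Integrable (fun t => ∫ s, G (t, s) ∂μS) μS := hGint.integral_prod_left
  have hMint : Integrable (fun s => ∫ t, G (t, s) ∂μS) μS := hGint.integral_prod_right
  have hSmem : ∀ᵐ t ∂μS, t ∈ S := ae_restrict_mem measurableSet_Ioo
  have hgα_int : IntegrableOn (fun t => g t (α t)) S := by
    refine ((hgS (α t₁)).add hNint).congr ?_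
    filter_upwards [hSmem] with t ht
    simp only [Pi.add_apply]
    rw [hN t ht]; ring
  have hfbarα'_t₂ : Integrable (fun s => fbar t₂ (α' s)) μS :=
    (fbar t₂).integrable_comp hα'S
  have hfbarα'_int : Integrable (fun s => fbar s (α' s)) μS := by
    refine (hfbarα'_t₂.sub hMint).congr ?_
    filter_upwards [hSmem] with s hs
    simp only [Pi.sub_apply]
    rw [hM s hs]; ring
  have hae : ∀ᵐ s ∂μS, fbar s (α' s) = f s (α' s) :=
    gelfand_aux_ae_eq f fbar α' μS
      (fun x => ae_restrict_of_ae_restrict_of_subset hsub (hfbar_ae x))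
      hα'S.aestronglyMeasurable
  have hfα'_int : IntegrableOn (fun s => f s (α' s)) S := hfbarα'_int.congr hae
  refine ⟨hgα_int, hfα'_int, ?_⟩
  -- the main computation
  have swap : (∫ t, ∫ s, G (t, s) ∂μS ∂μS) = ∫ s, ∫ t, G (t, s) ∂μS ∂μS :=
    integral_integral_swap (f := fun t s => G (t, s)) hGint
  have e1 : (∫ t in S, g t (α t)) = (∫ t, g t (α t₁) ∂μS) + ∫ t, (∫ s, G (t, s) ∂μS) ∂μS := by
    rw [← integral_add (hgS (α t₁)) hNint]
    refine integral_congr_ae ?_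
    filter_upwards [hSmem] with t ht
    rw [hN t ht]; ring
  have e2 : (∫ t, g t (α t₁) ∂μS) = fbar t₂ (α t₁) - fbar t₁ (α t₁) := by
    rw [hfbar_ftc t₁ ht₁ t₂ ht₂ (α t₁), intervalIntegral.integral_of_le h12,
      integral_Ioc_eq_integral_Ioo]
  have e3 : (∫ s, ∫ t, G (t, s) ∂μS ∂μS)
      = (∫ s, fbar t₂ (α' s) ∂μS) - ∫ s, fbar s (α' s) ∂μS := by
    rw [← integral_sub hfbarα'_t₂ hfbarα'_int]
    refine integral_congr_ae ?_
    filter_upwards [hSmem] with s hs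
    rw [hM s hs]
  have e4 : (∫ s, fbar t₂ (α' s) ∂μS) = fbar t₂ (α t₂) - fbar t₂ (α t₁) := by
    rw [ContinuousLinearMap.integral_comp_comm _ hα'S,
      show (∫ x in S, α' x) = α t₂ - α t₁ from hprim t₂ ht₂ h12, map_sub]
  have e5 : (∫ s, fbar s (α' s) ∂μS) = ∫ s in S, f s (α' s) :=
    integral_congr_ae hae
  calc (∫ t in S, g t (α t))
      = (fbar t₂ (α t₁) - fbar t₁ (α t₁)) + ((fbar t₂ (α t₂) - fbar t₂ (α t₁))
          - ∫ s in S, f s (α' s)) := by rw [e1, e2, swap, e3, e4, e5]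
    _ = fbar t₂ (α t₂) - fbar t₁ (α t₁) - ∫ t in S, f t (α' t) := by ring
end

section
/- Let u₋, u₊ ∈ ℝ, v₀ > 0, w₀ ≥ 0 and p₀ ∈ ℝ, set Δu = u₊ − u₋, and let T > 0 satisfy w₀ + Δu·t ≥ 0 for all t ∈ [0,T]. Define u(t,x) = u₋ for x < 0 and u(t,x) = u₊ for x > 0, p(t,x) = p₀, and the measure V(t) = v₀·dx + (w₀ + Δu·t)·δ₀. Then (V, u) satisfies the p-system distributionally on (0,T) × ℝ: for every φ ∈ C_c^∞((0,T) × ℝ), ∫∫ v₀ ∂_t φ dx dt + ∫_0^T (w₀ + Δu·t) ∂_t φ(t,0) dt = ∫∫ u ∂_x φ dx dt, and ∫∫ u ∂_t φ dx dt + ∫∫ p₀ ∂_x φ dx dt = 0. -/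
set_option maxHeartbeats 1000000
open MeasureTheory Set Filter Topology

/-- The integral over `ℝ` of the derivative of a `C¹` compactly supported function vanishes. -/
lemma integral_deriv_eq_zero_of_hasCompactSupport {f : ℝ → ℝ} (hf : ContDiff ℝ 1 f)
    (h2f : HasCompactSupport f) : ∫ x : ℝ, deriv f x = 0 := by
  have hint : Integrable (deriv f) :=
    (hf.continuous_deriv le_rfl).integrable_of_hasCompactSupport h2f.deriv
  have h := integral_add_compl (measurableSet_Iic (a := (0:ℝ))) hint
  rw [compl_Iic] at h
  rw [← h, HasCompactSupport.integral_Iic_deriv_eq hf h2f 0,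
    HasCompactSupport.integral_Ioi_deriv_eq hf h2f 0]
  ring

/-- The nonphysical configuration consisting of two constant states `(v₀, u₋)` and
`(v₀, u₊)` with constant pressure `p₀` separated by the varying Dirac mass
`(w₀ + Δu·t)δ₀` in the specific volume is a distributional (vacuum weak*) solution
of the p-system on `(0,T) × ℝ`. -/
theorem nonphysical_vacuum_is_distributional_solution
    (um up v₀ w₀ p₀ T : ℝ) (hv₀ : 0 < v₀) (hw₀ : 0 ≤ w₀) (hT : 0 < T)
    (hTw : ∀ t ∈ Icc (0:ℝ) T, 0 ≤ w₀ + (up - um) * t)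
    (u : ℝ → ℝ → ℝ)
    (hu : ∀ t x, (x < 0 → u t x = um) ∧ (0 < x → u t x = up)) :
    ∀ φ : ℝ → ℝ → ℝ,
      ContDiff ℝ (⊤ : ℕ∞) (fun q : ℝ × ℝ => φ q.1 q.2) →
      HasCompactSupport (fun q : ℝ × ℝ => φ q.1 q.2) →
      tsupport (fun q : ℝ × ℝ => φ q.1 q.2) ⊆ Ioo 0 T ×ˢ univ →
      ((∫ t in Ioo 0 T, ∫ x : ℝ, v₀ * deriv (fun s => φ s x) t) +
          (∫ t in Ioo 0 T, (w₀ + (up - um) * t) * deriv (fun s => φ s 0) t) =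
        ∫ t in Ioo 0 T, ∫ x : ℝ, u t x * deriv (fun y => φ t y) x) ∧
      ((∫ t in Ioo 0 T, ∫ x : ℝ, u t x * deriv (fun s => φ s x) t) +
          (∫ t in Ioo 0 T, ∫ x : ℝ, p₀ * deriv (fun y => φ t y) x) = 0) := by
  intro φ hφ hφc hφsupp
  have hΦd : Differentiable ℝ (fun q : ℝ × ℝ => φ q.1 q.2) := hφ.differentiable (by simp)
  set D1 : ℝ × ℝ → ℝ := fun q => fderiv ℝ (fun q : ℝ × ℝ => φ q.1 q.2) q (1, 0) with hD1def
  set D2 : ℝ × ℝ → ℝ := fun q => fderiv ℝ (fun q : ℝ × ℝ => φ q.1 q.2) q (0, 1) with hD2def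
  -- closed embeddings of slices
  have hemb1 : ∀ x : ℝ, IsClosedEmbedding (fun t : ℝ => ((t, x) : ℝ × ℝ)) := by
    intro x
    have hiso : Isometry (fun t : ℝ => ((t, x) : ℝ × ℝ)) := fun a b => by
      rw [Prod.edist_eq]; simp only [edist_self]; exact max_eq_left zero_le
    exact hiso.isClosedEmbedding
  have hemb2 : ∀ t : ℝ, IsClosedEmbedding (fun y : ℝ => ((t, y) : ℝ × ℝ)) := by
    intro t
    have hiso : Isometry (fun y : ℝ => ((t, y) : ℝ × ℝ)) := fun a b => by
      rw [Prod.edist_eq]; simp only [edist_self]; exact max_eq_right zero_le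
    exact hiso.isClosedEmbedding
  -- slice regularity
  have hsl1 : ∀ x : ℝ, ContDiff ℝ 1 (fun t => φ t x) ∧ HasCompactSupport (fun t => φ t x) := by
    intro x
    exact ⟨(hφ.of_le (by simp)).comp (contDiff_id.prodMk contDiff_const),
      hφc.comp_isClosedEmbedding (hemb1 x)⟩
  have hsl2 : ∀ t : ℝ, ContDiff ℝ 1 (fun y => φ t y) ∧ HasCompactSupport (fun y => φ t y) := by
    intro t
    exact ⟨(hφ.of_le (by simp)).comp (contDiff_const.prodMk contDiff_id),
      hφc.comp_isClosedEmbedding (hemb2 t)⟩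
  -- derivatives of slices
  have hd1 : ∀ x t, HasDerivAt (fun s => φ s x) (D1 (t, x)) t := by
    intro x t
    have h1 : HasDerivAt (fun s : ℝ => ((s, x) : ℝ × ℝ)) ((1 : ℝ), (0 : ℝ)) t :=
      (hasDerivAt_id t).prodMk (hasDerivAt_const t x)
    exact (hΦd (t, x)).hasFDerivAt.comp_hasDerivAt t h1
  have hd2 : ∀ t x, HasDerivAt (fun y => φ t y) (D2 (t, x)) x := by
    intro t x
    have h1 : HasDerivAt (fun y : ℝ => ((t, y) : ℝ × ℝ)) ((0 : ℝ), (1 : ℝ)) x :=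
      (hasDerivAt_const x t).prodMk (hasDerivAt_id x)
    exact (hΦd (t, x)).hasFDerivAt.comp_hasDerivAt x h1
  have hderT : ∀ x t, deriv (fun s => φ s x) t = D1 (t, x) := fun x t => (hd1 x t).deriv
  have hderX : ∀ t x, deriv (fun y => φ t y) x = D2 (t, x) := fun t x => (hd2 t x).deriv
  -- continuity and compact support of D1, D2
  have hD1c : Continuous D1 :=
    ((ContinuousLinearMap.apply ℝ ℝ ((1:ℝ), (0:ℝ))).continuous).comp (hφ.continuous_fderiv (by simp))
  have hD2c : Continuous D2 :=
    ((ContinuousLinearMap.apply ℝ ℝ ((0:ℝ), (1:ℝ))).continuous).comp (hφ.continuous_fderiv (by simp))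
  have hsuppD1 : Function.support D1 ⊆ tsupport (fun q : ℝ × ℝ => φ q.1 q.2) := by
    intro q hq
    refine support_fderiv_subset ℝ ?_
    simp only [Function.mem_support] at hq ⊢
    intro h
    apply hq
    rw [hD1def]; simp [h]
  have hsuppD2 : Function.support D2 ⊆ tsupport (fun q : ℝ × ℝ => φ q.1 q.2) := by
    intro q hq
    refine support_fderiv_subset ℝ ?_
    simp only [Function.mem_support] at hq ⊢
    intro h
    apply hq
    rw [hD2def]; simp [h]
  have hD1s : HasCompactSupport D1 := hφc.mono' hsuppD1
  have hD2s : HasCompactSupport D2 := hφc.mono' hsuppD2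
  -- vanishing outside Ioo 0 T
  have hout : ∀ t, t ∉ Ioo (0:ℝ) T → ∀ x, φ t x = 0 ∧ D1 (t, x) = 0 ∧ D2 (t, x) = 0 := by
    intro t ht x
    have hnot : ((t, x) : ℝ × ℝ) ∉ tsupport (fun q : ℝ × ℝ => φ q.1 q.2) := by
      intro h
      exact ht (hφsupp h).1
    refine ⟨image_eq_zero_of_notMem_tsupport (f := fun q : ℝ × ℝ => φ q.1 q.2) hnot, ?_, ?_⟩
    · by_contra h
      exact hnot (hsuppD1 h)
    · by_contra h
      exact hnot (hsuppD2 h)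
  -- integrals of slice derivatives
  have hIntT : ∀ x : ℝ, (∫ t : ℝ, D1 (t, x)) = 0 := by
    intro x
    have h := integral_deriv_eq_zero_of_hasCompactSupport (hsl1 x).1 (hsl1 x).2
    simpa only [hderT] using h
  have hIntX : ∀ t : ℝ, (∫ x : ℝ, D2 (t, x)) = 0 := by
    intro t
    have h := integral_deriv_eq_zero_of_hasCompactSupport (hsl2 t).1 (hsl2 t).2
    simpa only [hderX] using h
  have hIicX : ∀ t : ℝ, (∫ x in Iic (0:ℝ), D2 (t, x)) = φ t 0 := by
    intro t
    have h := HasCompactSupport.integral_Iic_deriv_eq (hsl2 t).1 (hsl2 t).2 0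
    simpa only [hderX] using h
  have hIoiX : ∀ t : ℝ, (∫ x in Ioi (0:ℝ), D2 (t, x)) = -φ t 0 := by
    intro t
    have h := HasCompactSupport.integral_Ioi_deriv_eq (hsl2 t).1 (hsl2 t).2 0
    simpa only [hderX] using h
  -- the simple profile
  set U : ℝ → ℝ := fun x => if x < 0 then um else up with hUdef
  have hUmeas : Measurable U := Measurable.ite measurableSet_Iio measurable_const measurable_const
  have hUbdd : ∀ x, ‖U x‖ ≤ max ‖um‖ ‖up‖ := by
    intro x
    rw [hUdef]
    dsimp only
    split
    · exact le_max_left _ _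
    · exact le_max_right _ _
  have hae0 : ∀ᵐ x : ℝ, x ≠ (0:ℝ) := by
    have h0 : (volume : Measure ℝ) {(0:ℝ)} = 0 := measure_singleton 0
    exact compl_mem_ae_iff.2 h0
  have haeU : ∀ (t : ℝ) (D : ℝ × ℝ → ℝ),
      (fun x => u t x * D (t, x)) =ᵐ[volume] fun x => U x * D (t, x) := by
    intro t D
    filter_upwards [hae0] with x hx
    rcases lt_trichotomy x 0 with h | h | h
    · rw [(hu t x).1 h, hUdef]; simp [h]
    · exact absurd h hx
    · rw [(hu t x).2 h, hUdef]; simp [not_lt.2 h.le]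
  -- rewrite the goal in terms of D1, D2
  simp only [hderT, hderX]
  -- Term A
  have hA : (∫ t in Ioo 0 T, ∫ x : ℝ, v₀ * D1 (t, x)) = 0 := by
    rw [setIntegral_eq_integral_of_forall_compl_eq_zero (fun t ht => by
      have h := fun x => (hout t ht x).2.1
      simp [h])]
    have hswap : Integrable (Function.uncurry fun t x : ℝ => v₀ * D1 (t, x))
        (volume.prod volume) :=
      (continuous_const.mul hD1c).integrable_of_hasCompactSupport hD1s.mul_left
    rw [integral_integral_swap hswap]
    have h : ∀ x : ℝ, (∫ t : ℝ, v₀ * D1 (t, x)) = 0 := by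
      intro x
      rw [integral_const_mul, hIntT x, mul_zero]
    simp [h]
  -- Term B
  have hB : (∫ t in Ioo 0 T, (w₀ + (up - um) * t) * D1 (t, 0)) = (um - up) * ∫ t : ℝ, φ t 0 := by
    have hg1 : ContDiff ℝ 1 (fun t => (w₀ + (up - um) * t) * φ t 0) :=
      (contDiff_const.add (contDiff_const.mul contDiff_id)).mul (hsl1 0).1
    have hg2 : HasCompactSupport (fun t => (w₀ + (up - um) * t) * φ t 0) :=
      (hsl1 0).2.mul_left
    have hgd : ∀ t : ℝ, HasDerivAt (fun t => (w₀ + (up - um) * t) * φ t 0)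
        ((up - um) * φ t 0 + (w₀ + (up - um) * t) * D1 (t, 0)) t := by
      intro t
      have h1 : HasDerivAt (fun t : ℝ => w₀ + (up - um) * t) (up - um) t := by
        simpa using ((hasDerivAt_id t).const_mul (up - um)).const_add w₀
      exact h1.mul (hd1 0 t)
    have hz : (∫ t : ℝ, ((up - um) * φ t 0 + (w₀ + (up - um) * t) * D1 (t, 0))) = 0 := by
      have h := integral_deriv_eq_zero_of_hasCompactSupport hg1 hg2
      rwa [show deriv (fun t => (w₀ + (up - um) * t) * φ t 0)
          = fun t => (up - um) * φ t 0 + (w₀ + (up - um) * t) * D1 (t, 0)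
        from funext fun t => (hgd t).deriv] at h
    have hi1 : Integrable (fun t : ℝ => (up - um) * φ t 0) :=
      (continuous_const.mul (hsl1 0).1.continuous).integrable_of_hasCompactSupport
        (hsl1 0).2.mul_left
    have hi2 : Integrable (fun t : ℝ => (w₀ + (up - um) * t) * D1 (t, 0)) := by
      have hc : Continuous (fun t : ℝ => D1 (t, 0)) :=
        hD1c.comp (continuous_id.prodMk continuous_const)
      have hs : HasCompactSupport (fun t : ℝ => D1 (t, 0)) :=
        hD1s.comp_isClosedEmbedding (hemb1 0)
      exact ((continuous_const.add (continuous_const.mul continuous_id)).mul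
        hc).integrable_of_hasCompactSupport hs.mul_left
    rw [integral_add hi1 hi2, integral_const_mul] at hz
    rw [setIntegral_eq_integral_of_forall_compl_eq_zero (fun t ht => by
      rw [(hout t ht 0).2.1, mul_zero])]
    linarith
  -- RHS of equation 1
  have hR : (∫ t in Ioo 0 T, ∫ x : ℝ, u t x * D2 (t, x)) = (um - up) * ∫ t : ℝ, φ t 0 := by
    have hinner : ∀ t : ℝ, (∫ x : ℝ, u t x * D2 (t, x)) = (um - up) * φ t 0 := by
      intro t
      rw [integral_congr_ae (haeU t D2)]
      have hD2int' : Integrable (fun x => D2 (t, x)) :=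
        (hD2c.comp (continuous_const.prodMk continuous_id)).integrable_of_hasCompactSupport
          (hD2s.comp_isClosedEmbedding (hemb2 t))
      have hint : Integrable (fun x => U x * D2 (t, x)) :=
        hD2int'.bdd_mul hUmeas.aestronglyMeasurable (Eventually.of_forall hUbdd)
      rw [← integral_add_compl (measurableSet_Iic (a := (0:ℝ))) hint, compl_Iic,
        integral_Iic_eq_integral_Iio]
      have heq1 : EqOn (fun x => U x * D2 (t, x)) (fun x => um * D2 (t, x)) (Iio (0:ℝ)) := by
        intro x hx
        have hx' : x < 0 := hx
        simp only [hUdef]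
        rw [if_pos hx']
      have heq2 : EqOn (fun x => U x * D2 (t, x)) (fun x => up * D2 (t, x)) (Ioi (0:ℝ)) := by
        intro x hx
        have hx' : (0:ℝ) < x := hx
        simp only [hUdef]
        rw [if_neg (not_lt.2 hx'.le)]
      have e1 : (∫ x in Iio (0:ℝ), U x * D2 (t, x)) = um * φ t 0 := by
        rw [setIntegral_congr_fun measurableSet_Iio heq1,
          integral_const_mul, ← integral_Iic_eq_integral_Iio, hIicX t]
      have e2 : (∫ x in Ioi (0:ℝ), U x * D2 (t, x)) = up * (-φ t 0) := by
        rw [setIntegral_congr_fun measurableSet_Ioi heq2,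
          integral_const_mul, hIoiX t]
      rw [e1, e2]; ring
    simp only [hinner]
    rw [integral_const_mul, setIntegral_eq_integral_of_forall_compl_eq_zero
      (fun t ht => (hout t ht 0).1)]
  -- Term C
  have hC : (∫ t in Ioo 0 T, ∫ x : ℝ, u t x * D1 (t, x)) = 0 := by
    have hinner : ∀ t : ℝ, (∫ x : ℝ, u t x * D1 (t, x)) = ∫ x : ℝ, U x * D1 (t, x) :=
      fun t => integral_congr_ae (haeU t D1)
    simp only [hinner]
    rw [setIntegral_eq_integral_of_forall_compl_eq_zero (fun t ht => by
      have h := fun x => (hout t ht x).2.1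
      simp [h])]
    have hswap : Integrable (Function.uncurry fun t x : ℝ => U x * D1 (t, x))
        (volume.prod volume) := by
      have hD1int : Integrable D1 := hD1c.integrable_of_hasCompactSupport hD1s
      exact hD1int.bdd_mul (hUmeas.comp measurable_snd).aestronglyMeasurable
        (Eventually.of_forall fun q => hUbdd q.2)
    rw [integral_integral_swap hswap]
    have h : ∀ x : ℝ, (∫ t : ℝ, U x * D1 (t, x)) = 0 := by
      intro x
      rw [integral_const_mul, hIntT x, mul_zero]
    simp [h]
  -- Term D
  have hD : (∫ t in Ioo 0 T, ∫ x : ℝ, p₀ * D2 (t, x)) = 0 := by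
    have hinner : ∀ t : ℝ, (∫ x : ℝ, p₀ * D2 (t, x)) = 0 := by
      intro t
      rw [integral_const_mul, hIntX t, mul_zero]
    simp [hinner]
  exact ⟨by rw [hA, hB, hR, zero_add], by rw [hC, hD, zero_add]⟩
end

section
/- Let u₀ > 0 and let τ : [u₀, ∞) → ℝ be continuous with τ(u₀) = 0, and suppose the limit L_τ := lim_{u→∞} τ(u)/u exists and is finite. Let φ ∈ C_c^∞(ℝ) with φ ≥ 0 and ∫_ℝ φ(x) dx = 1, and set φ_ε(x) = φ(x/ε)/ε for ε > 0. Then for every w₀ > 0, every x₀ ∈ ℝ and every bounded continuous g : ℝ → ℝ, lim_{ε→0⁺} ∫_ℝ τ(u₀ + w₀ φ_ε(x − x₀)) g(x) dx = L_τ · w₀ · g(x₀). -/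
open MeasureTheory Set Filter Topology

/-- Mollifier limit defining the extension of the stress to Dirac masses: if
`L_τ = lim_{u→∞} τ(u)/u` exists and is finite, then for any standard mollifier
`φ_ε` and any bounded continuous `g`,
`∫ τ(u₀ + w₀ φ_ε(x − x₀)) g(x) dx → L_τ · w₀ · g(x₀)` as `ε → 0⁺`. -/
theorem stress_extension_mollifier_limit
    (u₀ : ℝ) (hu₀ : 0 < u₀) (τ : ℝ → ℝ)
    (hτc : ContinuousOn τ (Ici u₀)) (hτ0 : τ u₀ = 0)
    (L : ℝ) (hL : Tendsto (fun u => τ u / u) atTop (𝓝 L))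
    (φ : ℝ → ℝ) (hφ : ContDiff ℝ (⊤ : ℕ∞) φ) (hφc : HasCompactSupport φ)
    (hφnonneg : ∀ x, 0 ≤ φ x) (hφint : ∫ x : ℝ, φ x = 1)
    (w₀ : ℝ) (hw₀ : 0 < w₀) (x₀ : ℝ)
    (g : ℝ → ℝ) (hg : Continuous g) (hgb : ∃ M : ℝ, ∀ x, |g x| ≤ M) :
    Tendsto (fun ε : ℝ => ∫ x : ℝ, τ (u₀ + w₀ * (φ ((x - x₀) / ε) / ε)) * g x)
      (𝓝[>] 0) (𝓝 (L * w₀ * g x₀)) := by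
  obtain ⟨M, hM⟩ := hgb
  have hM0 : 0 ≤ M := le_trans (abs_nonneg _) (hM 0)
  -- linear bound on τ : |τ u| ≤ C * u for u ≥ u₀
  obtain ⟨u₁, hu₁⟩ : ∃ u₁ : ℝ, ∀ u ≥ u₁, |τ u / u| ≤ |L| + 1 := by
    have h := Metric.tendsto_nhds.mp hL 1 one_pos
    obtain ⟨u₁, hu₁⟩ := eventually_atTop.mp h
    exact ⟨u₁, fun u hu => by
      have := hu₁ u hu
      rw [Real.dist_eq] at this
      calc |τ u / u| = |(τ u / u - L) + L| := by ring_nf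
        _ ≤ |τ u / u - L| + |L| := abs_add_le _ _
        _ ≤ |L| + 1 := by linarith⟩
  set u₂ : ℝ := max u₁ u₀ with hu₂def
  obtain ⟨C₁, hC₁⟩ := (isCompact_Icc (a := u₀) (b := u₂)).exists_bound_of_continuousOn
    (hτc.mono (fun x hx => hx.1))
  set C : ℝ := max (|L| + 1) (C₁ / u₀) with hCdef
  have hC0 : 0 < C := lt_of_lt_of_le (by positivity) (le_max_left _ _)
  have hτbound : ∀ u, u₀ ≤ u → |τ u| ≤ C * u := by
    intro u hu
    have hupos : 0 < u := lt_of_lt_of_le hu₀ hu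
    rcases le_total u u₂ with h | h
    · have := hC₁ u ⟨hu, h⟩
      rw [Real.norm_eq_abs] at this
      have hC₁u : C₁ ≤ C * u₀ := (div_le_iff₀ hu₀).mp (le_max_right _ _)
      calc |τ u| ≤ C₁ := this
        _ ≤ C * u₀ := hC₁u
        _ ≤ C * u := mul_le_mul_of_nonneg_left hu hC0.le
    · have hu1 : u ≥ u₁ := le_trans (le_max_left _ _) h
      have := hu₁ u hu1
      have h2 : |τ u| = |τ u / u| * u := by
        rw [abs_div, abs_of_pos hupos]; field_simp
      rw [h2]
      have : |τ u / u| * u ≤ (|L| + 1) * u :=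
        mul_le_mul_of_nonneg_right this hupos.le
      exact le_trans this (mul_le_mul_of_nonneg_right (le_max_left _ _) hupos.le)
  -- the rescaled integrand after substitution x = x₀ + ε y
  set F : ℝ → ℝ → ℝ :=
    fun ε y => ε * (τ (u₀ + w₀ * (φ y / ε)) * g (x₀ + ε * y)) with hFdef
  set f : ℝ → ℝ := fun y => L * w₀ * g x₀ * φ y with hfdef
  -- values in Ici u₀
  have hval : ∀ ε : ℝ, 0 < ε → ∀ y : ℝ, u₀ ≤ u₀ + w₀ * (φ y / ε) := by
    intro ε hε y
    have : 0 ≤ w₀ * (φ y / ε) :=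
      mul_nonneg hw₀.le (div_nonneg (hφnonneg y) hε.le)
    linarith
  -- measurability
  have hFmeas : ∀ ε : ℝ, 0 < ε → AEStronglyMeasurable (F ε) volume := by
    intro ε hε
    have hcont : Continuous fun y => u₀ + w₀ * (φ y / ε) :=
      continuous_const.add (continuous_const.mul (hφ.continuous.div_const ε))
    have h1 : Continuous fun y => τ (u₀ + w₀ * (φ y / ε)) :=
      hτc.comp_continuous hcont (fun y => hval ε hε y)
    have h2 : Continuous fun y : ℝ => x₀ + ε * y :=
      continuous_const.add (continuous_const.mul continuous_id)
    exact (continuous_const.mul (h1.mul (hg.comp h2))).aestronglyMeasurable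
  -- the bound
  set bound : ℝ → ℝ :=
    (tsupport φ).indicator (fun y => C * M * (u₀ + w₀ * φ y)) with hbdef
  have hbound_int : Integrable bound := by
    have hcont : Continuous fun y => C * M * (u₀ + w₀ * φ y) :=
      continuous_const.mul (continuous_const.add (continuous_const.mul hφ.continuous))
    exact (hcont.continuousOn.integrableOn_compact hφc).integrable_indicator
      (isClosed_tsupport φ).measurableSet
  have hFbound : ∀ ε : ℝ, ε ∈ Ioo (0:ℝ) 1 → ∀ y : ℝ, ‖F ε y‖ ≤ bound y := by
    intro ε hε y
    by_cases hy : y ∈ tsupport φ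
    · have hεpos := hε.1
      set v : ℝ := u₀ + w₀ * (φ y / ε) with hvdef
      have hv : u₀ ≤ v := hval ε hεpos y
      have hvpos : 0 < v := lt_of_lt_of_le hu₀ hv
      have hτv : |τ v| ≤ C * v := hτbound v hv
      have hεv : ε * v = ε * u₀ + w₀ * φ y := by
        rw [hvdef]; field_simp
      have key : ‖F ε y‖ ≤ C * M * (ε * u₀ + w₀ * φ y) := by
        rw [hFdef]
        simp only [Real.norm_eq_abs, abs_mul, abs_of_pos hεpos]
        calc ε * (|τ v| * |g (x₀ + ε * y)|)
            ≤ ε * ((C * v) * M) := by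
              apply mul_le_mul_of_nonneg_left _ hεpos.le
              exact mul_le_mul hτv (hM _) (abs_nonneg _) (by positivity)
          _ = C * M * (ε * v) := by ring
          _ = C * M * (ε * u₀ + w₀ * φ y) := by rw [hεv]
      rw [hbdef, indicator_of_mem hy]
      refine le_trans key ?_
      have : ε * u₀ ≤ u₀ := by nlinarith [hε.2, hu₀]
      have h0 : 0 ≤ C * M := by positivity
      nlinarith [h0, this]
    · have hφy : φ y = 0 := image_eq_zero_of_notMem_tsupport hy
      rw [hbdef, indicator_of_notMem hy, hFdef]
      simp [hφy, hτ0]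
  -- pointwise limit
  have hFlim : ∀ y : ℝ, Tendsto (fun ε => F ε y) (𝓝[>] 0) (𝓝 (f y)) := by
    intro y
    by_cases hy : φ y = 0
    · have : ∀ ε : ℝ, F ε y = 0 := by
        intro ε; rw [hFdef]; simp [hy, hτ0]
      rw [hfdef]
      simp only [hy, mul_zero]
      exact tendsto_const_nhds.congr (fun ε => (this ε).symm)
    · have hφy : 0 < φ y := lt_of_le_of_ne (hφnonneg y) (Ne.symm hy)
      set v : ℝ → ℝ := fun ε => u₀ + w₀ * (φ y / ε) with hvdef
      have h1 : Tendsto v (𝓝[>] 0) atTop := by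
        rw [hvdef]
        apply tendsto_atTop_add_const_left
        have : Tendsto (fun ε : ℝ => (w₀ * φ y) * ε⁻¹) (𝓝[>] 0) atTop :=
          tendsto_inv_nhdsGT_zero.const_mul_atTop (by positivity)
        exact this.congr (fun ε => by ring)
      have h2 : Tendsto (fun ε => τ (v ε) / v ε) (𝓝[>] 0) (𝓝 L) := hL.comp h1
      have h3 : Tendsto (fun ε => ε * v ε) (𝓝[>] 0) (𝓝 (w₀ * φ y)) := by
        have hc : Tendsto (fun ε : ℝ => ε * u₀ + w₀ * φ y) (𝓝[>] 0)
            (𝓝 (0 * u₀ + w₀ * φ y)) := by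
          apply Tendsto.mono_left _ nhdsWithin_le_nhds
          exact ((tendsto_id.mul_const u₀).add tendsto_const_nhds)
        rw [zero_mul, zero_add] at hc
        refine hc.congr' ?_
        filter_upwards [self_mem_nhdsWithin] with ε (hε : 0 < ε)
        rw [hvdef]; field_simp
      have h4 : Tendsto (fun ε : ℝ => g (x₀ + ε * y)) (𝓝[>] 0) (𝓝 (g x₀)) := by
        have hcont : Continuous (fun ε : ℝ => x₀ + ε * y) :=
          continuous_const.add (continuous_id.mul continuous_const)
        have : Tendsto (fun ε : ℝ => x₀ + ε * y) (𝓝 0) (𝓝 (x₀ + 0 * y)) :=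
          hcont.tendsto 0
        rw [zero_mul, add_zero] at this
        exact (hg.tendsto x₀).comp (this.mono_left nhdsWithin_le_nhds)
      have h5 := (h2.mul h3).mul h4
      have h6 : f y = L * (w₀ * φ y) * g x₀ := by rw [hfdef]; ring
      rw [h6]
      refine h5.congr' ?_
      filter_upwards [self_mem_nhdsWithin] with ε (hε : 0 < ε)
      have hvpos : 0 < v ε := lt_of_lt_of_le hu₀ (hval ε hε y)
      have key : ∀ a t : ℝ, a ≠ 0 → t / a * (ε * a) = ε * t := by
        intro a t ha; field_simp
      show τ (v ε) / v ε * (ε * v ε) * g (x₀ + ε * y) = F ε y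
      rw [key (v ε) (τ (v ε)) hvpos.ne']
      rw [hFdef, hvdef]
      simp only
      ring
  -- dominated convergence
  have hmain : Tendsto (fun ε => ∫ y, F ε y) (𝓝[>] 0) (𝓝 (∫ y, f y)) := by
    refine tendsto_integral_filter_of_dominated_convergence bound ?_ ?_ hbound_int ?_
    · filter_upwards [self_mem_nhdsWithin] with ε (hε : 0 < ε)
      exact hFmeas ε hε
    · filter_upwards [Ioo_mem_nhdsGT_of_mem (by simp : (0:ℝ) ∈ Ico (0:ℝ) 1)]
        with ε hε
      exact ae_of_all _ (hFbound ε hε)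
    · exact ae_of_all _ hFlim
  have hint : (∫ y, f y) = L * w₀ * g x₀ := by
    rw [hfdef]
    rw [integral_const_mul, hφint, mul_one]
  rw [hint] at hmain
  -- change of variables: the original integral equals ∫ F ε for ε > 0
  refine hmain.congr' ?_
  filter_upwards [self_mem_nhdsWithin] with ε (hε : 0 < ε)
  set H : ℝ → ℝ := fun y => τ (u₀ + w₀ * (φ y / ε)) * g (x₀ + ε * y) with hHdef
  have hHF : ∀ y, F ε y = ε * H y := fun y => rfl
  have e1 : ∀ x : ℝ, τ (u₀ + w₀ * (φ ((x - x₀) / ε) / ε)) * g x = H ((x - x₀) / ε) := by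
    intro x
    rw [hHdef]
    simp only
    rw [mul_div_cancel₀ (x - x₀) (ne_of_gt hε)]
    congr 1
    ring
  calc (∫ y, F ε y) = ε * ∫ y, H y := by simp_rw [hHF]; rw [integral_const_mul]
    _ = |ε| • ∫ y, H y := by rw [abs_of_pos hε, smul_eq_mul]
    _ = ∫ x, H (x / ε) := (Measure.integral_comp_div H ε).symm
    _ = ∫ x, (fun z => H (z / ε)) (x - x₀) :=
        (integral_sub_right_eq_self (fun z => H (z / ε)) x₀).symm
    _ = ∫ x, H ((x - x₀) / ε) := rfl
    _ = ∫ x, τ (u₀ + w₀ * (φ ((x - x₀) / ε) / ε)) * g x := by simp_rw [e1]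
end

section
/- Let u₀ > 0 and let W : [u₀, ∞) → ℝ be continuous and convex with W(u₀) = 0, and suppose L_W := lim_{u→∞} W(u)/u is finite. Let φ ∈ C_c^∞(ℝ) with φ ≥ 0 and ∫_ℝ φ(x) dx = 1, and set φ_ε(x) = φ(x/ε)/ε for ε > 0. Then for every w₀ > 0, every x₀ ∈ ℝ and every bounded continuous g : ℝ → ℝ, lim_{ε→0⁺} ∫_ℝ W(u₀ + w₀ φ_ε(x − x₀)) g(x) dx = L_W · w₀ · g(x₀). -/
open MeasureTheory Set Filter Topology

set_option maxHeartbeats 1000000 in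
/-- Mollifier limit defining the extension of the stored elastic energy to Dirac
masses: if `W` is convex with finite limit `L_W = lim_{u→∞} W(u)/u`, then for any
standard mollifier `φ_ε` and any bounded continuous `g`,
`∫ W(u₀ + w₀ φ_ε(x − x₀)) g(x) dx → L_W · w₀ · g(x₀)` as `ε → 0⁺`. -/
theorem energy_extension_mollifier_limit
    (u₀ : ℝ) (hu₀ : 0 < u₀) (W : ℝ → ℝ)
    (hWc : ContinuousOn W (Ici u₀)) (hWconv : ConvexOn ℝ (Ici u₀) W)
    (hW0 : W u₀ = 0)
    (LW : ℝ) (hLW : Tendsto (fun u => W u / u) atTop (𝓝 LW))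
    (φ : ℝ → ℝ) (hφ : ContDiff ℝ (⊤ : ℕ∞) φ) (hφc : HasCompactSupport φ)
    (hφnonneg : ∀ x, 0 ≤ φ x) (hφint : ∫ x : ℝ, φ x = 1)
    (w₀ : ℝ) (hw₀ : 0 < w₀) (x₀ : ℝ)
    (g : ℝ → ℝ) (hg : Continuous g) (hgb : ∃ M : ℝ, ∀ x, |g x| ≤ M) :
    Tendsto (fun ε : ℝ => ∫ x : ℝ, W (u₀ + w₀ * (φ ((x - x₀) / ε) / ε)) * g x)
      (𝓝[>] 0) (𝓝 (LW * w₀ * g x₀)) := by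
  obtain ⟨M, hM⟩ := hgb
  have hM0 : 0 ≤ M := (abs_nonneg _).trans (hM 0)
  -- slope monotonicity
  have hslope_mono : ∀ {a b : ℝ}, u₀ < a → a ≤ b →
      W a / (a - u₀) ≤ W b / (b - u₀) := by
    intro a b ha hab
    have h := hWconv.secant_mono (a := u₀) (x := a) (y := b) self_mem_Ici ha.le
      (ha.le.trans hab) (by intro h; exact absurd h (ne_of_gt ha))
      (by intro h; exact absurd h (ne_of_gt (lt_of_lt_of_le ha hab))) hab
    simpa [hW0] using h
  -- slope tends to LW at infinity
  have hStendsto : Tendsto (fun u => W u / (u - u₀)) atTop (𝓝 LW) := by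
    have h1 : Tendsto (fun u : ℝ => u₀ / (u - u₀)) atTop (𝓝 0) :=
      tendsto_const_nhds.div_atTop (tendsto_atTop_add_const_right _ (-u₀)
        tendsto_id)
    have h2 : Tendsto (fun u : ℝ => (W u / u) * (1 + u₀ / (u - u₀))) atTop
        (𝓝 (LW * (1 + 0))) :=
      hLW.mul (tendsto_const_nhds.add h1)
    rw [add_zero, mul_one] at h2
    refine h2.congr' ?_
    filter_upwards [eventually_gt_atTop (max u₀ 0 + 1)] with u hu
    have hu0 : u ≠ 0 := by
      have := (le_max_right u₀ 0); nlinarith [le_max_right u₀ 0]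
    have hu0' : u - u₀ ≠ 0 := by
      have := le_max_left u₀ 0; nlinarith [le_max_left u₀ 0]
    field_simp
    ring
  -- upper bound
  have hub : ∀ u, u₀ ≤ u → W u ≤ LW * (u - u₀) := by
    intro u hu
    rcases eq_or_lt_of_le hu with rfl | hu
    · simp [hW0]
    · have hle : W u / (u - u₀) ≤ LW :=
        ge_of_tendsto hStendsto (eventually_atTop.2
          ⟨u, fun v hv => hslope_mono hu hv⟩)
      have h : 0 < u - u₀ := by linarith
      calc W u = W u / (u - u₀) * (u - u₀) := by field_simp
        _ ≤ LW * (u - u₀) := by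
          exact mul_le_mul_of_nonneg_right hle h.le
  -- compact bound
  obtain ⟨C, hC⟩ := (isCompact_Icc (a := u₀) (b := u₀ + 2)).exists_bound_of_continuousOn
    (hWc.mono (Icc_subset_Ici_self))
  have hC0 : 0 ≤ C := le_trans (norm_nonneg _) (hC u₀ ⟨le_refl _, by linarith⟩)
  set m : ℝ := W (u₀ + 2) - W (u₀ + 1) with hm
  -- lower bound for large u
  have hlow : ∀ u, u₀ + 2 ≤ u → W (u₀ + 1) + m * (u - (u₀ + 1)) ≤ W u := by
    intro u hu
    rcases eq_or_lt_of_le hu with rfl | hu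
    · have h1 : u₀ + 2 - (u₀ + 1) = (1:ℝ) := by ring
      rw [h1, mul_one, hm]; linarith
    · have h := hWconv.secant_mono (a := u₀ + 1) (x := u₀ + 2) (y := u)
        (mem_Ici.2 (by linarith)) (mem_Ici.2 (by linarith))
        (mem_Ici.2 (by linarith))
        (by norm_num) (by intro h; subst h; linarith) hu.le
      have h2 : (0:ℝ) < u - (u₀ + 1) := by linarith
      rw [show (u₀ + 2 - (u₀ + 1) : ℝ) = 1 by ring, div_one, le_div_iff₀ h2] at h
      simp only [← hm] at h
      nlinarith
  set A : ℝ := C + |W (u₀ + 1)| + 2 * |m| with hA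
  set B : ℝ := |m| + |LW| with hB
  have hA0 : 0 ≤ A := by positivity
  have hB0 : 0 ≤ B := by positivity
  have habs : ∀ u, u₀ ≤ u → |W u| ≤ A + B * (u - u₀) := by
    intro u hu
    rcases le_or_gt u (u₀ + 2) with hcase | hcase
    · have h := hC u ⟨hu, hcase⟩
      rw [Real.norm_eq_abs] at h
      have : 0 ≤ B * (u - u₀) := mul_nonneg hB0 (by linarith)
      calc |W u| ≤ C := h
        _ ≤ A + B * (u - u₀) := by simp [hA]; nlinarith [abs_nonneg (W (u₀+1)), abs_nonneg m]
    · rw [abs_le]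
      constructor
      · have h := hlow u hcase.le
        have h1 := neg_abs_le (W (u₀ + 1))
        have h2 := neg_abs_le m
        have h3 := le_abs_self m
        have h4 : (0:ℝ) ≤ u - (u₀ + 1) := by linarith
        simp only [hA, hB]
        nlinarith [mul_le_mul_of_nonneg_right h3 h4, abs_nonneg LW, abs_nonneg m]
      · have h := hub u (by linarith)
        have h1 := le_abs_self LW
        have h4 : (0:ℝ) ≤ u - u₀ := by linarith
        simp only [hA, hB]
        nlinarith [mul_le_mul_of_nonneg_right h1 h4, abs_nonneg m, abs_nonneg (W (u₀+1))]
  -- the substituted integrand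
  set G : ℝ → ℝ → ℝ := fun ε y => ε * (W (u₀ + w₀ * (φ y / ε)) * g (x₀ + ε * y)) with hG
  -- change of variables
  have key : ∀ ε : ℝ, 0 < ε →
      (∫ x : ℝ, W (u₀ + w₀ * (φ ((x - x₀) / ε) / ε)) * g x) = ∫ y : ℝ, G ε y := by
    intro ε hε
    set F : ℝ → ℝ := fun x => W (u₀ + w₀ * (φ ((x - x₀) / ε) / ε)) * g x with hF
    have h1 : (∫ y : ℝ, F (x₀ + ε * y)) = |ε⁻¹| • ∫ x : ℝ, F x := by
      rw [MeasureTheory.Measure.integral_comp_mul_left (fun z => F (x₀ + z)) ε,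
        integral_add_left_eq_self F x₀]
    have h2 : ∀ y : ℝ, G ε y = ε * F (x₀ + ε * y) := by
      intro y
      simp only [hG, hF]
      congr 3
      rw [add_sub_cancel_left, mul_div_cancel_left₀ _ (ne_of_gt hε)]
    calc (∫ x : ℝ, F x) = ε • ((|ε⁻¹|) • ∫ x : ℝ, F x) := by
          rw [smul_smul, abs_of_pos (inv_pos.2 hε), mul_inv_cancel₀ (ne_of_gt hε), one_smul]
      _ = ε • ∫ y : ℝ, F (x₀ + ε * y) := by rw [h1]
      _ = ∫ y : ℝ, ε * F (x₀ + ε * y) := by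
          rw [← integral_smul]; simp [smul_eq_mul]
      _ = ∫ y : ℝ, G ε y := by simp_rw [h2]
  -- pointwise limit function
  set f : ℝ → ℝ := fun y => LW * w₀ * φ y * g x₀ with hf
  have hfint : (∫ y : ℝ, f y) = LW * w₀ * g x₀ := by
    have : (fun y => f y) = fun y => (LW * w₀ * g x₀) * φ y := by
      funext y; simp only [hf]; ring
    rw [this, integral_const_mul, hφint, mul_one]
  -- main convergence via dominated convergence
  have main : Tendsto (fun ε : ℝ => ∫ y : ℝ, G ε y) (𝓝[>] 0)
      (𝓝 (LW * w₀ * g x₀)) := by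
    rw [← hfint]
    apply tendsto_integral_filter_of_dominated_convergence
      (fun y => M * (A * Set.indicator (tsupport φ) (fun _ => (1:ℝ)) y + B * (w₀ * φ y)))
    · -- measurability
      filter_upwards [self_mem_nhdsWithin] with ε hε
      have hε : (0:ℝ) < ε := hε
      have hcont : Continuous fun y => u₀ + w₀ * (φ y / ε) :=
        continuous_const.add (continuous_const.mul ((hφ.continuous).div_const ε))
      have hmaps : ∀ y, u₀ + w₀ * (φ y / ε) ∈ Ici u₀ := by
        intro y
        have : 0 ≤ w₀ * (φ y / ε) := mul_nonneg hw₀.le (div_nonneg (hφnonneg y) hε.le)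
        simp [mem_Ici]; linarith
      have hWcomp : Continuous fun y => W (u₀ + w₀ * (φ y / ε)) :=
        hWc.comp_continuous hcont hmaps
      exact ((continuous_const.mul (hWcomp.mul
        (hg.comp (continuous_const.add (continuous_const.mul continuous_id))))).aestronglyMeasurable)
    · -- domination
      filter_upwards [Ioo_mem_nhdsGT_of_mem ⟨le_refl (0:ℝ), zero_lt_one⟩] with ε hε
      refine ae_of_all _ fun y => ?_
      obtain ⟨hε0, hε1⟩ := hε
      by_cases hy : y ∈ tsupport φ
      · have hφy : 0 ≤ φ y := hφnonneg y
        have ht : 0 ≤ w₀ * (φ y / ε) := by positivity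
        have hWb := habs (u₀ + w₀ * (φ y / ε)) (by linarith)
        rw [add_sub_cancel_left] at hWb
        have hWa : |W (u₀ + w₀ * (φ y / ε))| ≤ A + B * (w₀ * (φ y / ε)) := hWb
        have : ‖G ε y‖ = ε * (|W (u₀ + w₀ * (φ y / ε))| * |g (x₀ + ε * y)|) := by
          simp [hG, abs_mul, abs_of_pos hε0]
        rw [this]
        have hgb' := hM (x₀ + ε * y)
        have hG1 : ε * (|W (u₀ + w₀ * (φ y / ε))| * |g (x₀ + ε * y)|)
            ≤ ε * ((A + B * (w₀ * (φ y / ε))) * M) := by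
          apply mul_le_mul_of_nonneg_left _ hε0.le
          exact mul_le_mul hWa hgb' (abs_nonneg _) (add_nonneg hA0 (mul_nonneg hB0 ht))
        have hεne : ε ≠ 0 := ne_of_gt hε0
        have hφε : φ y / ε * ε = φ y := div_mul_cancel₀ _ hεne
        have hG2 : ε * ((A + B * (w₀ * (φ y / ε))) * M)
            = (ε * A + B * (w₀ * φ y)) * M := by
          linear_combination (B * w₀ * M) * hφε
        have hG3 : (ε * A + B * (w₀ * φ y)) * M ≤ (A + B * (w₀ * φ y)) * M := by
          apply mul_le_mul_of_nonneg_right _ hM0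
          have : ε * A ≤ A := by nlinarith
          linarith
        rw [Set.indicator_of_mem hy]
        calc ε * (|W (u₀ + w₀ * (φ y / ε))| * |g (x₀ + ε * y)|)
            ≤ (A + B * (w₀ * φ y)) * M := le_trans hG1 (hG2 ▸ hG3)
          _ = M * (A * 1 + B * (w₀ * φ y)) := by ring
      · have hφy : φ y = 0 := image_eq_zero_of_notMem_tsupport hy
        have : G ε y = 0 := by simp [hG, hφy, hW0]
        rw [this, Set.indicator_of_notMem hy]
        simp only [norm_zero]
        positivity
    · -- integrability of the bound
      apply Integrable.const_mul
      apply Integrable.add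
      · apply Integrable.const_mul
        rw [integrable_indicator_iff (isClosed_tsupport φ).measurableSet]
        exact integrableOn_const hφc.isCompact.measure_lt_top.ne
      · exact (((hφ.continuous).integrable_of_hasCompactSupport hφc).const_mul w₀).const_mul B
    · -- pointwise convergence
      refine ae_of_all _ fun y => ?_
      by_cases hy : φ y = 0
      · have : ∀ ε : ℝ, G ε y = 0 := by intro ε; simp [hG, hy, hW0]
        simp only [this, hf, hy]
        simpa using tendsto_const_nhds
      · have hφy : 0 < φ y := lt_of_le_of_ne (hφnonneg y) (Ne.symm hy)
        set c : ℝ := w₀ * φ y with hc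
        have hc0 : 0 < c := by positivity
        -- c / ε → ∞
        have hT : Tendsto (fun ε : ℝ => c / ε) (𝓝[>] 0) atTop := by
          simp_rw [div_eq_mul_inv]
          exact (tendsto_inv_nhdsGT_zero).const_mul_atTop hc0
        -- W(u₀+T)/T → LW
        have hWq : Tendsto (fun T : ℝ => W (u₀ + T) / T) atTop (𝓝 LW) := by
          have := hStendsto.comp (tendsto_atTop_add_const_left atTop u₀ tendsto_id)
          refine this.congr fun T => ?_
          simp [add_sub_cancel_left]
        have hWcomp : Tendsto (fun ε : ℝ => W (u₀ + c / ε) / (c / ε)) (𝓝[>] 0)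
            (𝓝 LW) := hWq.comp hT
        have hgcomp : Tendsto (fun ε : ℝ => g (x₀ + ε * y)) (𝓝[>] 0) (𝓝 (g x₀)) := by
          have hcont : Continuous fun ε : ℝ => g (x₀ + ε * y) :=
            hg.comp (continuous_const.add (continuous_mul_right y))
          have := hcont.tendsto' 0 (g x₀) (by simp)
          exact this.mono_left nhdsWithin_le_nhds
        have hmul : Tendsto (fun ε : ℝ => c * (W (u₀ + c / ε) / (c / ε)) * g (x₀ + ε * y))
            (𝓝[>] 0) (𝓝 (c * LW * g x₀)) :=
          ((tendsto_const_nhds.mul hWcomp).mul hgcomp)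
        have heq : ∀ᶠ ε in 𝓝[>] (0:ℝ),
            c * (W (u₀ + c / ε) / (c / ε)) * g (x₀ + ε * y) = G ε y := by
          filter_upwards [self_mem_nhdsWithin] with ε hε
          have hε : (0:ℝ) < ε := hε
          have hcε : c / ε ≠ 0 := by positivity
          simp only [hG, hc]
          rw [mul_div_assoc]
          field_simp
        have : Tendsto (fun ε : ℝ => G ε y) (𝓝[>] 0) (𝓝 (c * LW * g x₀)) :=
          hmul.congr' heq
        have hfv : f y = c * LW * g x₀ := by simp only [hf, hc]; ring
        rw [hfv]
        exact this
  exact main.congr' (by filter_upwards [self_mem_nhdsWithin] with ε hε; exact (key ε hε).symm)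
end

section
/- Let τ : (0,∞) → ℝ be continuous and strictly increasing with finite limit τ_∞ = lim_{u→∞} τ(u). Let T > 0, let w ∈ C¹([0,T]) with w ≥ 0 and w(0) = 0, and let u_* : [0,T] → (0,∞) and [v] : [0,T] → ℝ be such that for every t ∈ [0,T]: (i) w'(t) = [v](t) (the Rankine–Hugoniot condition at a stationary crack), and (ii) the entropy production at the crack is nonpositive: τ_∞ · w'(t) − [v](t) · τ(u_*(t)) ≤ 0. Then w'(t) ≤ 0 for all t ∈ [0,T], and consequently w ≡ 0 on [0,T]: no fracture can form in an entropy solution of one-dimensional elastodynamics. -/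
open MeasureTheory Set Filter Topology

/-- No fracture can form in an entropy solution of one-dimensional
elastodynamics: if the stress `τ` is continuous and strictly increasing on
`(0,∞)` with finite limit `τ_∞ = lim_{u→∞} τ(u)`, the crack width `w ∈ C¹([0,T])`
is nonnegative with `w(0) = 0`, the stationary-crack Rankine–Hugoniot condition
`w' = [v]` holds, and the entropy production at the crack is nonpositive
(`τ_∞ w' − [v]·τ(u_*) ≤ 0`), then `w' ≤ 0` and `w ≡ 0` on `[0,T]`. -/
theorem no_fracture_in_entropy_solution
    (τ : ℝ → ℝ) (hτc : ContinuousOn τ (Ioi 0))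
    (hτmono : StrictMonoOn τ (Ioi 0))
    (τinf : ℝ) (hτinf : Tendsto τ atTop (𝓝 τinf))
    (T : ℝ) (hT : 0 < T)
    (w w' : ℝ → ℝ)
    (hw : ∀ t ∈ Icc 0 T, HasDerivWithinAt w (w' t) (Icc 0 T) t)
    (hw'cont : ContinuousOn w' (Icc 0 T))
    (hwnonneg : ∀ t ∈ Icc 0 T, 0 ≤ w t)
    (hw0 : w 0 = 0)
    (ustar : ℝ → ℝ) (hustar : ∀ t ∈ Icc 0 T, 0 < ustar t)
    (jv : ℝ → ℝ)
    (hRH : ∀ t ∈ Icc 0 T, w' t = jv t)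
    (hent : ∀ t ∈ Icc 0 T, τinf * w' t - jv t * τ (ustar t) ≤ 0) :
    (∀ t ∈ Icc 0 T, w' t ≤ 0) ∧ ∀ t ∈ Icc 0 T, w t = 0 := by
  have hlt : ∀ x : ℝ, 0 < x → τ x < τinf := by
    intro x hx
    have h1 : τ x < τ (x + 1) :=
      hτmono hx (by simp [mem_Ioi]; linarith) (by linarith)
    have h2 : τ (x + 1) ≤ τinf := by
      refine ge_of_tendsto hτinf ?_
      filter_upwards [eventually_ge_atTop (x + 1)] with y hy
      rcases eq_or_lt_of_le hy with h | h
      · exact le_of_eq (congrArg τ h)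
      · exact (hτmono (by simp [mem_Ioi]; linarith) (by simp [mem_Ioi]; linarith) h).le
    linarith
  have hw'le : ∀ t ∈ Icc 0 T, w' t ≤ 0 := by
    intro t ht
    have h1 := hent t ht
    rw [← hRH t ht] at h1
    have h2 : τ (ustar t) < τinf := hlt _ (hustar t ht)
    nlinarith [h1, h2]
  refine ⟨hw'le, fun t ht => ?_⟩
  have hanti : AntitoneOn w (Icc 0 T) := by
    refine antitoneOn_of_hasDerivWithinAt_nonpos (f' := w') (convex_Icc 0 T)
      (fun x hx => (hw x hx).continuousWithinAt) (fun x hx => ?_) (fun x hx => ?_)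
    · exact (hw x (interior_subset hx)).mono interior_subset
    · exact hw'le x (interior_subset hx)
  have := hanti (left_mem_Icc.mpr hT.le) ht ht.1
  have := hwnonneg t ht
  linarith [hw0 ▸ this]
end

section
/- Let τ : (0,∞) → ℝ be continuous and strictly increasing with finite limit τ_∞ = lim_{u→∞} τ(u), let 0 < α < λ and σ > 0 satisfy σ²(λ − α) = τ(λ) − τ(α), and set Y₀ = σ(λ − α) and θ = σ(½Y₀² − ∫_α^λ τ(s) ds) + τ(α)·Y₀. Then θ + Y₀(τ_∞ − τ(α)) = σ ∫_α^λ ( ½(τ(λ) − τ(α)) + (τ_∞ − τ(s)) ) ds, and this quantity is strictly positive. -/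
open MeasureTheory Set Filter Topology

/-- The energetic cost of opening a crack: for a continuous strictly increasing
stress `τ` with finite limit `τ_∞`, with `σ²(λ−α) = τ(λ)−τ(α)`, `Y₀ = σ(λ−α)` and
shock entropy production `θ = σ(½Y₀² − ∫_α^λ τ) + τ(α)Y₀`, one has
`θ + Y₀(τ_∞ − τ(α)) = σ∫_α^λ (½(τ(λ)−τ(α)) + (τ_∞ − τ(s))) ds`, and this
quantity is strictly positive; hence the crack-free solution has lower energy. -/
theorem crack_energy_cost_positive
    (τ : ℝ → ℝ) (hτc : ContinuousOn τ (Ioi 0))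
    (hτmono : StrictMonoOn τ (Ioi 0))
    (τinf : ℝ) (hτinf : Tendsto τ atTop (𝓝 τinf))
    (α lam σ Y₀ θ : ℝ)
    (hα : 0 < α) (hαlam : α < lam) (hσ : 0 < σ)
    (hRH : σ ^ 2 * (lam - α) = τ lam - τ α)
    (hY : Y₀ = σ * (lam - α))
    (hθ : θ = σ * (Y₀ ^ 2 / 2 - ∫ s in α..lam, τ s) + τ α * Y₀) :
    (θ + Y₀ * (τinf - τ α) =
      σ * ∫ s in α..lam, ((τ lam - τ α) / 2 + (τinf - τ s))) ∧
    (0 < θ + Y₀ * (τinf - τ α)) := by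
  have hsub : uIcc α lam ⊆ Ioi 0 := by
    rw [uIcc_of_le hαlam.le]
    intro x hx
    exact lt_of_lt_of_le hα hx.1
  have hint : IntervalIntegrable τ volume α lam :=
    (hτc.mono hsub).intervalIntegrable
  have hle : ∀ s, 0 < s → τ s ≤ τinf := by
    intro s hs
    refine ge_of_tendsto hτinf ?_
    filter_upwards [eventually_gt_atTop s] with t ht
    exact (hτmono (mem_Ioi.2 hs) (mem_Ioi.2 (hs.trans ht)) ht).le
  have hτlt : τ α < τ lam := hτmono (mem_Ioi.2 hα) (mem_Ioi.2 (hα.trans hαlam)) hαlam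
  have hintc : IntervalIntegrable (fun s => (τ lam - τ α) / 2 + (τinf - τ s)) volume α lam :=
    intervalIntegrable_const.add (intervalIntegrable_const.sub hint)
  have heq : θ + Y₀ * (τinf - τ α) =
      σ * ∫ s in α..lam, ((τ lam - τ α) / 2 + (τinf - τ s)) := by
    rw [intervalIntegral.integral_add intervalIntegrable_const
          (intervalIntegrable_const.sub hint),
        intervalIntegral.integral_sub intervalIntegrable_const hint,
        intervalIntegral.integral_const, intervalIntegral.integral_const]
    subst hY hθ
    simp only [smul_eq_mul]
    linear_combination (σ * (lam - α) / 2) * hRH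
  refine ⟨heq, ?_⟩
  rw [heq]
  refine mul_pos hσ ?_
  refine intervalIntegral.intervalIntegral_pos_of_pos_on hintc ?_ hαlam
  intro x hx
  have hx0 : 0 < x := hα.trans hx.1
  have := hle x hx0
  linarith
end
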